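/- arXiv:0910.0284 — 4 statements merged into one kernel-verified Lean document; each statement's English description precedes it below -/
import Mathlib

section
/- For subspaces Z, R, S, T of a finite-dimensional vector space V over a field F, define H(X) = dim X, H(X|Y) = dim(X+Y) - dim Y, and I(X;Y|T) = dim(X+T) + dim(Y+T) - dim(X+Y+T) - dim T. Then H(Z|R) + I(R;S|T) ≥ I(Z;S|T). -/
open Module

noncomputable def condH {F V : Type*} [Field F] [AddCommGroup V] [Module F V]
    (X Y : Submodule F V) : ℤ :=
  (finrank F ↑(X ⊔ Y) : ℤ) - finrank F ↑Y

noncomputable def mutI {F V : Type*} [Field F] [AddCommGroup V] [Module F V]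
    (X Y : Submodule F V) : ℤ :=
  (finrank F ↑X : ℤ) + finrank F ↑Y - finrank F ↑(X ⊔ Y)

noncomputable def condI {F V : Type*} [Field F] [AddCommGroup V] [Module F V]
    (X Y T : Submodule F V) : ℤ :=
  (finrank F ↑(X ⊔ T) : ℤ) + finrank F ↑(Y ⊔ T) - finrank F ↑(X ⊔ Y ⊔ T) - finrank F ↑T

/-! Rewriting the entropies as dimensions, the gap
`H(Z|R) + I(R;S|T) - I(Z;S|T)` equals `I(Z;T|R) + I(S;R|Z+T) + H(Z|R+S+T)`,
and each of these three terms is nonnegative: conditional mutual information by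
the modular law `dim(X+Y) + dim(X ∩ Y) = dim X + dim Y`, conditional entropy by
monotonicity of `dim`. -/

section InformationQuantities

variable {F V : Type*} [Field F] [AddCommGroup V] [Module F V]

theorem condH_nonneg [FiniteDimensional F V] (X Y : Submodule F V) : 0 ≤ condH X Y := by
  have : finrank F Y ≤ finrank F ↑(X ⊔ Y) := Submodule.finrank_mono le_sup_right
  unfold condH
  omega

theorem condI_nonneg [FiniteDimensional F V] (X Y T : Submodule F V) : 0 ≤ condI X Y T := by
  have modular := Submodule.finrank_sup_add_finrank_inf_eq (X ⊔ T) (Y ⊔ T)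
  have hT : finrank F T ≤ finrank F ↑((X ⊔ T) ⊓ (Y ⊔ T)) :=
    Submodule.finrank_mono (le_inf le_sup_right le_sup_right)
  rw [show X ⊔ T ⊔ (Y ⊔ T) = X ⊔ Y ⊔ T by ac_rfl] at modular
  unfold condI
  omega

theorem condH_add_condI_eq (Z R S T : Submodule F V) :
    condH Z R + condI R S T =
      condI Z S T + condI Z T R + condI S R (Z ⊔ T) + condH Z (R ⊔ S ⊔ T) := by
  unfold condH condI
  rw [show T ⊔ R = R ⊔ T from sup_comm _ _, show Z ⊔ T ⊔ R = R ⊔ (Z ⊔ T) by ac_rfl,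
    show S ⊔ (Z ⊔ T) = Z ⊔ S ⊔ T by ac_rfl,
    show S ⊔ R ⊔ (Z ⊔ T) = Z ⊔ (R ⊔ S ⊔ T) by ac_rfl]
  ring

end InformationQuantities

theorem stmt0 {F V : Type*} [Field F] [AddCommGroup V] [Module F V] [FiniteDimensional F V]
    (Z R S T : Submodule F V) :
    condH Z R + condI R S T ≥ condI Z S T := by
  rw [ge_iff_le, condH_add_condI_eq]
  have := condI_nonneg Z T R
  have := condI_nonneg S R (Z ⊔ T)
  have := condH_nonneg Z (R ⊔ S ⊔ T)
  linarith
end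

section
/- For subspaces Z, R, S, T of a finite-dimensional vector space V, H(Z|R) + H(Z|S) + I(R;S|T) ≥ H(Z|T) + H(Z|R+S+T), where H(X|Y) = dim(X+Y) - dim Y and I(X;Y|T) = dim(X+T) + dim(Y+T) - dim(X+Y+T) - dim T. -/
/-! Dimension is submodular: `dim (A + B) + dim C ≤ dim A + dim B` whenever `C ≤ A ⊓ B`.
Applied to `(Z + R, R + T; R)`, `(Z + S, S + T; S)` and `(Z + R + T, Z + S + T; Z + T)`,
the three inequalities add up to the claim. -/

open Module

theorem Submodule.finrank_sup_add_finrank_le_of_le {K V : Type*} [DivisionRing K]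
    [AddCommGroup V] [Module K V] {s t u : Submodule K V} [FiniteDimensional K s]
    [FiniteDimensional K t] (hs : u ≤ s) (ht : u ≤ t) :
    finrank K ↑(s ⊔ t) + finrank K u ≤ finrank K s + finrank K t := by
  rw [← finrank_sup_add_finrank_inf_eq s t]
  exact Nat.add_le_add_left (finrank_mono (le_inf hs ht)) _

theorem stmt3 {F V : Type*} [Field F] [AddCommGroup V] [Module F V] [FiniteDimensional F V]
    (Z R S T : Submodule F V) :
    condH Z R + condH Z S + condI R S T ≥ condH Z T + condH Z (R ⊔ S ⊔ T) := by
  have hR := Submodule.finrank_sup_add_finrank_le_of_le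
    (le_sup_right : R ≤ Z ⊔ R) (le_sup_left : R ≤ R ⊔ T)
  have hS := Submodule.finrank_sup_add_finrank_le_of_le
    (le_sup_right : S ≤ Z ⊔ S) (le_sup_left : S ≤ S ⊔ T)
  have hZ := Submodule.finrank_sup_add_finrank_le_of_le
    (sup_le_sup_right le_sup_left T : Z ⊔ T ≤ Z ⊔ R ⊔ T)
    (sup_le_sup_right le_sup_left T : Z ⊔ T ≤ Z ⊔ S ⊔ T)
  rw [show Z ⊔ R ⊔ (R ⊔ T) = Z ⊔ R ⊔ T by ac_rfl] at hR
  rw [show Z ⊔ S ⊔ (S ⊔ T) = Z ⊔ S ⊔ T by ac_rfl] at hS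
  rw [show Z ⊔ R ⊔ T ⊔ (Z ⊔ S ⊔ T) = Z ⊔ (R ⊔ S ⊔ T) by ac_rfl] at hZ
  simp only [condH, condI, ge_iff_le]
  omega
end

section
/- For subspaces A, B, C, D, E of a finite-dimensional vector space V, I(A;B) ≤ I(A;B|C) + I(A;B|D) + I(C;D|E) + I(A;E), where I(X;Y) = dim X + dim Y - dim(X+Y) and I(X;Y|T) = dim(X+T) + dim(Y+T) - dim(X+Y+T) - dim T. -/
open Module

/-!
Put `W = A ⊓ B`, so that `I(A;B) = dim W`. Conditioning `W` on `C` and on `D` loses at most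
`I(A;B|C)` and `I(A;B|D)` dimensions, and by submodularity of `dim` what survives both,
`W ⊓ C ⊓ D`, has dimension at least `dim W - I(A;B|C) - I(A;B|D)`. Since `W ⊓ C ⊓ D` lies in
`C ⊓ D`, conditioning it on `E` loses at most `I(C;D|E)`, and what survives lies in `A ⊓ E`,
of dimension `I(A;E)`.
-/

section

variable {F V : Type*} [Field F] [AddCommGroup V] [Module F V] [FiniteDimensional F V]

lemma mutI_eq_finrank_inf (X Y : Submodule F V) : mutI X Y = finrank F ↑(X ⊓ Y) := by
  have := Submodule.finrank_sup_add_finrank_inf_eq X Y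
  unfold mutI
  omega

lemma condH_eq_finrank_sub_finrank_inf (X T : Submodule F V) :
    condH X T = finrank F ↑X - finrank F ↑(X ⊓ T) := by
  have := Submodule.finrank_sup_add_finrank_inf_eq X T
  unfold condH
  omega

/-- `I(X;Y|T) = dim ((X ⊔ T) ⊓ (Y ⊔ T)) - dim T`, and `Z ⊔ T` lies in that intersection. -/
lemma condH_le_condI {X Y Z : Submodule F V} (T : Submodule F V) (hX : Z ≤ X) (hY : Z ≤ Y) :
    condH Z T ≤ condI X Y T := by
  have hmod := Submodule.finrank_sup_add_finrank_inf_eq (X ⊔ T) (Y ⊔ T)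
  have hsup : (X ⊔ T) ⊔ (Y ⊔ T) = X ⊔ Y ⊔ T := by
    rw [sup_sup_sup_comm, sup_idem]
  have hZ : finrank F ↑(Z ⊔ T) ≤ finrank F ↑((X ⊔ T) ⊓ (Y ⊔ T)) :=
    Submodule.finrank_mono (le_inf (sup_le_sup_right hX T) (sup_le_sup_right hY T))
  rw [hsup] at hmod
  unfold condH condI
  omega

lemma finrank_inf_add_finrank_inf_le (W C D : Submodule F V) :
    finrank F ↑(W ⊓ C) + finrank F ↑(W ⊓ D) ≤ finrank F ↑W + finrank F ↑(W ⊓ C ⊓ D) := by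
  have hmod := Submodule.finrank_sup_add_finrank_inf_eq (W ⊓ C) (W ⊓ D)
  have hsup : finrank F ↑(W ⊓ C ⊔ W ⊓ D) ≤ finrank F ↑W :=
    Submodule.finrank_mono (sup_le inf_le_left inf_le_left)
  have hinf : W ⊓ C ⊓ (W ⊓ D) = W ⊓ C ⊓ D := by
    rw [inf_inf_inf_comm, inf_idem, inf_assoc]
  rw [hinf] at hmod
  omega

end

theorem stmt6 {F V : Type*} [Field F] [AddCommGroup V] [Module F V] [FiniteDimensional F V]
    (A B C D E : Submodule F V) :
    mutI A B ≤ condI A B C + condI A B D + condI C D E + mutI A E := by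
  have hC := condH_le_condI C (inf_le_left : A ⊓ B ≤ A) inf_le_right
  have hD := condH_le_condI D (inf_le_left : A ⊓ B ≤ A) inf_le_right
  have hE := condH_le_condI E (inf_le_left.trans inf_le_right : A ⊓ B ⊓ C ⊓ D ≤ C) inf_le_right
  have hsub := finrank_inf_add_finrank_inf_le (A ⊓ B) C D
  have hAE : finrank F ↑(A ⊓ B ⊓ C ⊓ D ⊓ E) ≤ finrank F ↑(A ⊓ E) :=
    Submodule.finrank_mono (inf_le_inf_right E (inf_le_left.trans (inf_le_left.trans inf_le_left)))
  rw [condH_eq_finrank_sub_finrank_inf] at hC hD hE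
  rw [mutI_eq_finrank_inf, mutI_eq_finrank_inf]
  omega
end

section
/- For subspaces R, S, T of a finite-dimensional vector space V, if dim(R ∩ T) = dim(S ∩ T), dim(R ∩ T) = dim((R+S) ∩ T), and dim(R ∩ T) = dim(R ∩ S), then R ∩ S ⊆ T. -/
/-! The subspace `(R ⊓ T) ⊓ (S ⊓ T) = R ⊓ S ⊓ T` lies in `R ⊓ S`, and Grassmann's formula inside
`(R ⊔ S) ⊓ T` bounds its dimension from below by
`dim (R ⊓ T) + dim (S ⊓ T) - dim ((R ⊔ S) ⊓ T)`, which the hypotheses make equal to `dim (R ⊓ S)`.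
So `R ⊓ S ⊓ T = R ⊓ S`. -/

open Module

namespace Submodule

variable {F V : Type*} [DivisionRing F] [AddCommGroup V] [Module F V] [FiniteDimensional F V]

theorem finrank_add_finrank_le_of_sup_le {A B C : Submodule F V} (h : A ⊔ B ≤ C) :
    finrank F A + finrank F B ≤ finrank F C + finrank F ↑(A ⊓ B) := by
  rw [← finrank_sup_add_finrank_inf_eq A B]
  exact Nat.add_le_add_right (finrank_mono h) _

theorem le_of_finrank_le_finrank_inf {P T : Submodule F V}
    (h : finrank F P ≤ finrank F ↑(P ⊓ T)) : P ≤ T := by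
  rw [← eq_of_le_of_finrank_le inf_le_left h]
  exact inf_le_right

end Submodule

theorem stmt18 {F V : Type*} [Field F] [AddCommGroup V] [Module F V] [FiniteDimensional F V]
    (R S T : Submodule F V)
    (h1 : finrank F ↑(R ⊓ T) = finrank F ↑(S ⊓ T))
    (h2 : finrank F ↑(R ⊓ T) = finrank F ↑((R ⊔ S) ⊓ T))
    (h3 : finrank F ↑(R ⊓ T) = finrank F ↑(R ⊓ S)) :
    R ⊓ S ≤ T := by
  have hsup : R ⊓ T ⊔ S ⊓ T ≤ (R ⊔ S) ⊓ T :=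
    sup_le (inf_le_inf_right T le_sup_left) (inf_le_inf_right T le_sup_right)
  have hinf : R ⊓ T ⊓ (S ⊓ T) = R ⊓ S ⊓ T := (inf_inf_distrib_right R S T).symm
  have grassmann := Submodule.finrank_add_finrank_le_of_sup_le hsup
  rw [hinf] at grassmann
  exact Submodule.le_of_finrank_le_finrank_inf (by omega)
end
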